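/- Suppose there exist constants M₀ ≥ 1 and α > 0 such that for every φ ∈ C([-r,0],𝕂ⁿ) and every t ≥ 0, the mild solution x of ẋ(t) = L x_t with continuous initial history φ satisfies sup_{θ∈[-r,0]} |x(t+θ)| ≤ M₀ e^{-αt} ‖φ‖. Then there exists a constant M ≥ 1 such that |X^L(t)| ≤ M e^{-αt} for all t ≥ 0 (operator norm). -/

import Mathlib

open MeasureTheory

/-- `X` is the principal fundamental matrix solution of `ẋ(t) = L x_t`:
`X = O` on `[-r,0)`, `X` continuous on `[0,∞)`, `X(0) = I`, and for every `ξ` and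
`t ≥ 0`, `X(t)ξ = ξ + L(θ ↦ ∫_0^{max(t+θ,0)} X(s)ξ ds)`. -/
def IsPFMS {𝕜 : Type*} [RCLike 𝕜] {n : ℕ} (r : ℝ)
    (L : C(Set.Icc (-r) (0:ℝ), Fin n → 𝕜) →L[𝕜] (Fin n → 𝕜))
    (X : ℝ → ((Fin n → 𝕜) →L[𝕜] (Fin n → 𝕜))) : Prop :=
  (∀ t ∈ Set.Ico (-r) (0:ℝ), X t = 0) ∧
  ContinuousOn X (Set.Ici (0:ℝ)) ∧ X 0 = 1 ∧
  ∀ ξ : Fin n → 𝕜, ∀ t, 0 ≤ t → ∃ ψ : C(Set.Icc (-r) (0:ℝ), Fin n → 𝕜),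
    (∀ θ : Set.Icc (-r) (0:ℝ), ψ θ = ∫ s in (0:ℝ)..(max (t + (θ : ℝ)) 0), X s ξ) ∧
    X t ξ = ξ + L ψ

/-- `x` is the mild solution of `ẋ(t) = L x_t` with continuous initial history `φ`:
`x = φ` on `[-r,0]`, `x` continuous on `[-r,∞)`, and `x(t) = φ(0) + L(∫_0^t x_s ds)`
for all `t ≥ 0`. -/
def IsMildSolC {𝕜 : Type*} [RCLike 𝕜] {n : ℕ} (r : ℝ)
    (L : C(Set.Icc (-r) (0:ℝ), Fin n → 𝕜) →L[𝕜] (Fin n → 𝕜))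
    (φ : C(Set.Icc (-r) (0:ℝ), Fin n → 𝕜)) (x : ℝ → Fin n → 𝕜) : Prop :=
  (∀ θ : Set.Icc (-r) (0:ℝ), x θ = φ θ) ∧
  ContinuousOn x (Set.Ici (-r)) ∧
  ∀ t, 0 ≤ t → ∃ ψ : C(Set.Icc (-r) (0:ℝ), Fin n → 𝕜),
    (∀ θ : Set.Icc (-r) (0:ℝ), ψ θ = ∫ s in (θ : ℝ)..(t + (θ : ℝ)), x s) ∧
    x t = x 0 + L ψ

/-- If the solution semigroup is uniformly `α`-exponentially stable, then the principal
fundamental matrix solution is `α`-exponentially stable. -/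
theorem stmt_14 {𝕜 : Type*} [RCLike 𝕜] {n : ℕ} (hn : 0 < n) {r : ℝ} (hr : 0 < r)
    (L : C(Set.Icc (-r) (0:ℝ), Fin n → 𝕜) →L[𝕜] (Fin n → 𝕜))
    (X : ℝ → ((Fin n → 𝕜) →L[𝕜] (Fin n → 𝕜))) (hX : IsPFMS r L X)
    {M₀ α : ℝ} (hM₀ : 1 ≤ M₀) (hα : 0 < α)
    (hsg : ∀ (φ : C(Set.Icc (-r) (0:ℝ), Fin n → 𝕜)) (x : ℝ → Fin n → 𝕜),
      IsMildSolC r L φ x →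
      ∀ t, 0 ≤ t → ∀ θ ∈ Set.Icc (-r) (0:ℝ),
        ‖x (t + θ)‖ ≤ M₀ * Real.exp (-α * t) * ‖φ‖) :
    ∃ M : ℝ, 1 ≤ M ∧ ∀ t, 0 ≤ t → ‖X t‖ ≤ M * Real.exp (-α * t) := by

  obtain ⟨hX0, hXc, hXI, hXeq⟩ := hX
  haveI : Nonempty (Fin n) := ⟨⟨0, hn⟩⟩
  have hXcξ : ∀ ξ : Fin n → 𝕜, ContinuousOn (fun s => X s ξ) (Set.Ici (0:ℝ)) :=
    fun ξ => hXc.clm_apply continuousOn_const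
  obtain ⟨z, hz, hzmax⟩ := (isCompact_Icc (a := (0:ℝ)) (b := r)).exists_isMaxOn
    ⟨0, ⟨le_refl _, hr.le⟩⟩
    (continuous_norm.comp_continuousOn (hXc.mono (fun x hx => hx.1)))
  set C := ‖X z‖ with hCdef
  have hCb : ∀ t ∈ Set.Icc (0:ℝ) r, ‖X t‖ ≤ C := fun t htm => hzmax htm
  have hC1 : 1 ≤ C := by
    have h := hCb 0 ⟨le_refl _, hr.le⟩
    rw [hXI] at h
    simpa using h
  have key : ∀ ξ : Fin n → 𝕜, ∀ s, 0 ≤ s →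
      ‖X (r + s) ξ‖ ≤ M₀ * Real.exp (-α * s) * (C * ‖ξ‖) := by
    intro ξ s hs
    have hcont : Continuous fun θ : Set.Icc (-r) (0:ℝ) => X (r + (θ:ℝ)) ξ := by
      apply (hXcξ ξ).comp_continuous (continuous_const.add continuous_subtype_val)
      intro θ
      have := θ.2.1
      exact Set.mem_Ici.mpr (by show (0:ℝ) ≤ r + (θ:ℝ); linarith)
    set φ : C(Set.Icc (-r) (0:ℝ), Fin n → 𝕜) := ⟨fun θ => X (r + (θ:ℝ)) ξ, hcont⟩ with hφdef
    set x : ℝ → Fin n → 𝕜 := fun u => X (r + u) ξ with hxdef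
    have hint : ∀ b, 0 ≤ b → IntervalIntegrable (fun s => X s ξ) volume 0 b := by
      intro b hb
      apply ContinuousOn.intervalIntegrable
      apply (hXcξ ξ).mono
      rw [Set.uIcc_of_le hb]
      exact fun x hx => hx.1
    have hms : IsMildSolC r L φ x := by
      refine ⟨fun θ => rfl, ?_, ?_⟩
      · apply (hXcξ ξ).comp (continuous_const.add continuous_id).continuousOn
        intro u hu
        simp only [Set.mem_Ici, id_eq, Pi.add_apply] at hu ⊢
        linarith
      · intro u hu
        obtain ⟨ψ₁, hψ₁, he₁⟩ := hXeq ξ (u + r) (by linarith)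
        obtain ⟨ψ₂, hψ₂, he₂⟩ := hXeq ξ r hr.le
        refine ⟨ψ₁ - ψ₂, ?_, ?_⟩
        · intro θ
          have hθ1 := θ.2.1
          have hθ2 := θ.2.2
          have hmax1 : max (u + r + (θ:ℝ)) 0 = u + r + (θ:ℝ) := max_eq_left (by linarith)
          have hmax2 : max (r + (θ:ℝ)) 0 = r + (θ:ℝ) := max_eq_left (by linarith)
          have hdiff : ψ₁ θ - ψ₂ θ = ∫ s in (r + (θ:ℝ))..(u + r + (θ:ℝ)), X s ξ := by
            rw [hψ₁ θ, hψ₂ θ, hmax1, hmax2,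
              intervalIntegral.integral_interval_sub_left
                (hint _ (by linarith)) (hint _ (by linarith))]
          simp only [ContinuousMap.sub_apply]
          rw [hdiff, hxdef]
          rw [intervalIntegral.integral_comp_add_left (fun s => X s ξ) r]
          congr 1
          ring
        · have hxu : x u = X (u + r) ξ := by rw [hxdef]; simp [add_comm]
          have hx0 : x 0 = X r ξ := by rw [hxdef]; simp
          rw [hxu, hx0, he₁, he₂, map_sub]
          abel
    have hb := hsg φ x hms s hs 0 ⟨by linarith, le_refl 0⟩
    rw [add_zero] at hb
    have hφn : ‖φ‖ ≤ C * ‖ξ‖ := by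
      rw [ContinuousMap.norm_le _ (by positivity)]
      intro θ
      have hθ1 := θ.2.1
      have hθ2 := θ.2.2
      calc ‖φ θ‖ = ‖X (r + (θ:ℝ)) ξ‖ := rfl
        _ ≤ ‖X (r + (θ:ℝ))‖ * ‖ξ‖ := ContinuousLinearMap.le_opNorm _ _
        _ ≤ C * ‖ξ‖ := by
            gcongr
            exact hCb (r + (θ:ℝ)) ⟨by linarith, by linarith⟩
    calc ‖X (r + s) ξ‖ = ‖x s‖ := rfl
      _ ≤ M₀ * Real.exp (-α * s) * ‖φ‖ := hb
      _ ≤ M₀ * Real.exp (-α * s) * (C * ‖ξ‖) := by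
          apply mul_le_mul_of_nonneg_left hφn
          have := Real.exp_pos (-α * s)
          nlinarith
  refine ⟨M₀ * C * Real.exp (α * r), ?_, ?_⟩
  · have h1 : (1:ℝ) ≤ Real.exp (α * r) := Real.one_le_exp (by positivity)
    have h2 : (1:ℝ) ≤ M₀ * C := by nlinarith
    nlinarith
  intro t ht
  rcases le_or_gt t r with htr | htr
  · have h1 : ‖X t‖ ≤ C := hCb t ⟨ht, htr⟩
    have h2 : (1:ℝ) ≤ Real.exp (α * r) * Real.exp (-α * t) := by
      rw [← Real.exp_add]
      apply Real.one_le_exp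
      nlinarith
    have h3 : C ≤ M₀ * C * (Real.exp (α * r) * Real.exp (-α * t)) := by
      have hc0 : (0:ℝ) ≤ C := by linarith
      have h4 : C ≤ M₀ * C := le_mul_of_one_le_left hc0 hM₀
      have h5 : M₀ * C ≤ M₀ * C * (Real.exp (α * r) * Real.exp (-α * t)) :=
        le_mul_of_one_le_right (by nlinarith) h2
      linarith
    calc ‖X t‖ ≤ C := h1
      _ ≤ M₀ * C * (Real.exp (α * r) * Real.exp (-α * t)) := h3
      _ = M₀ * C * Real.exp (α * r) * Real.exp (-α * t) := by ring
  · have hs : 0 ≤ t - r := by linarith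
    have hnn : 0 ≤ M₀ * C * Real.exp (α * r) * Real.exp (-α * t) :=
      mul_nonneg (mul_nonneg (mul_nonneg (by linarith) (by linarith))
        (Real.exp_pos _).le) (Real.exp_pos _).le
    apply ContinuousLinearMap.opNorm_le_bound _ hnn
    intro ξ
    have hk := key ξ (t - r) hs
    rw [show r + (t - r) = t by ring] at hk
    calc ‖X t ξ‖ ≤ M₀ * Real.exp (-α * (t - r)) * (C * ‖ξ‖) := hk
      _ = M₀ * C * Real.exp (α * r) * Real.exp (-α * t) * ‖ξ‖ := by
          rw [show -α * (t - r) = α * r + -α * t by ring, Real.exp_add]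
          ring
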